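/- Suppose A(λ, r) is nonempty for every (λ, r) ∈ ℝᵐ × (0, ∞) and the set of optimal dual solutions is nonempty. Then Algorithm 1 terminates finitely: there is no infinite sequence {(xᵏ, t_k, λᵏ, r_k)} with t_{k+1} > 0, (x^{k+1}, t_{k+1}) ∈ A(λᵏ, r_k), λ^{k+1} = λᵏ + (r_k/t_{k+1}) h(x^{k+1}) and r_{k+1} = 2 r_k for all k; equivalently, any run of Algorithm 1 reaches an index k̄ with t_{k̄+1} = 0, and then x^{k̄+1} is an optimal primal solution and (λ^{k̄}, r_{k̄}) is an optimal dual solution. -/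

import Mathlib

noncomputable section

open Classical in
/-- The extended-real-valued smoothing function `L̃_{λ,r}(x,t)`. -/
def Ltilde {n m : ℕ} (f : EuclideanSpace ℝ (Fin n) → ℝ)
    (h : EuclideanSpace ℝ (Fin n) → EuclideanSpace ℝ (Fin m))
    (lam : EuclideanSpace ℝ (Fin m)) (r : ℝ)
    (x : EuclideanSpace ℝ (Fin n)) (t : ℝ) : EReal :=
  if 0 < t then
    (((f x + (inner ℝ lam (h x) : ℝ) + r / (2 * t) * ‖h x‖ ^ 2 + r / 2 * t) : ℝ) : EReal)
  else if t = 0 ∧ h x = 0 then ((f x : ℝ) : EReal)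
  else ⊤

/-- The augmented dual function `q̃(λ, r) = inf_{(x,t)} L̃_{λ,r}(x,t)`. -/
def qtilde {n m : ℕ} (f : EuclideanSpace ℝ (Fin n) → ℝ)
    (h : EuclideanSpace ℝ (Fin n) → EuclideanSpace ℝ (Fin m))
    (lam : EuclideanSpace ℝ (Fin m)) (r : ℝ) : EReal :=
  ⨅ p : EuclideanSpace ℝ (Fin n) × ℝ, Ltilde f h lam r p.1 p.2

/-- The set `A(λ, r)` of global minimizers of `L̃_{λ,r}`. -/
def Aset {n m : ℕ} (f : EuclideanSpace ℝ (Fin n) → ℝ)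
    (h : EuclideanSpace ℝ (Fin n) → EuclideanSpace ℝ (Fin m))
    (lam : EuclideanSpace ℝ (Fin m)) (r : ℝ) :
    Set (EuclideanSpace ℝ (Fin n) × ℝ) :=
  {p | Ltilde f h lam r p.1 p.2 = qtilde f h lam r}

/-!
Along a run of the algorithm every minimizer `(x, t)` of `L̃_{λ,r}` with `t > 0` satisfies
`‖h x‖ = t`, so `q̃(λ, r) = f x + ⟨λ, h x⟩ + r t`. Comparing with the value of `L̃_{λ̄,r̄}` at the
same point, for an optimal dual pair `(λ̄, r̄)`, gives `(r - r̄) t ≤ ⟨λ̄ - λ, h x⟩`, and hence the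
multiplier update satisfies `‖λ̄ - λ⁺‖² ≤ ‖λ̄ - λ‖² - r (r - 2 r̄)`. Since `r_k = 2ᵏ r₀ → ∞`, the
squared distances would eventually decrease by at least `1` at every step, which is impossible.
When the run stops at `t = 0`, the minimizer is feasible and `f x̂ = q̃(λ, r)`, so weak duality
makes `x̂` primal optimal and `(λ, r)` dual optimal.
-/

open Filter

lemma eq_of_div_mul_sq_add_le_mul {r t c : ℝ} (hr : 0 < r) (ht : 0 < t)
    (h : r / (2 * t) * c ^ 2 + r / 2 * t ≤ r * c) : c = t := by
  have hsq : r / (2 * t) * (c - t) ^ 2 ≤ 0 := by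
    have : r / (2 * t) * (c - t) ^ 2 = r / (2 * t) * c ^ 2 + r / 2 * t - r * c := by
      field_simp; ring
    linarith
  have hcoef : 0 < r / (2 * t) := by positivity
  have : (c - t) ^ 2 = 0 := le_antisymm (nonpos_of_mul_nonpos_right hsq hcoef) (sq_nonneg _)
  exact sub_eq_zero.mp (pow_eq_zero_iff two_ne_zero |>.mp this)

lemma norm_sub_div_smul_sq_le {E : Type*} [NormedAddCommGroup E] [InnerProductSpace ℝ E]
    {u v : E} {r s t : ℝ} (hr : 0 ≤ r) (ht : 0 < t) (hv : ‖v‖ = t)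
    (huv : (r - s) * t ≤ inner ℝ u v) :
    ‖u - (r / t) • v‖ ^ 2 ≤ ‖u‖ ^ 2 - r * (r - 2 * s) := by
  have hinner : r * (r - s) ≤ r / t * inner ℝ u v := by
    calc r * (r - s) = r / t * ((r - s) * t) := by field_simp
      _ ≤ r / t * inner ℝ u v := by gcongr
  have hnorm : ‖(r / t) • v‖ = r := by
    rw [norm_smul, hv, Real.norm_of_nonneg (by positivity)]; field_simp
  rw [norm_sub_sq_real, real_inner_smul_right, hnorm]
  linarith

lemma not_tendsto_atTop_of_le_sub {a d : ℕ → ℝ} (ha : ∀ k, 0 ≤ a k)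
    (hstep : ∀ k, a (k + 1) ≤ a k - d k) : ¬ Tendsto d atTop atTop := by
  intro hd
  obtain ⟨N, hN⟩ := eventually_atTop.mp (hd.eventually_ge_atTop 1)
  have hdecr : ∀ j : ℕ, a (N + j) ≤ a N - j := by
    intro j
    induction j with
    | zero => simp
    | succ j ih =>
      rw [← add_assoc]
      push_cast
      linarith [hstep (N + j), hN (N + j) (by omega)]
  obtain ⟨j, hj⟩ := exists_nat_gt (a N)
  linarith [hdecr j, ha (N + j)]

section AugmentedDual

variable {n m : ℕ} {f : EuclideanSpace ℝ (Fin n) → ℝ}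
  {h : EuclideanSpace ℝ (Fin n) → EuclideanSpace ℝ (Fin m)}
  {lam : EuclideanSpace ℝ (Fin m)} {r t : ℝ} {x : EuclideanSpace ℝ (Fin n)}

lemma Ltilde_of_pos (ht : 0 < t) :
    Ltilde f h lam r x t =
      ((f x + inner ℝ lam (h x) + r / (2 * t) * ‖h x‖ ^ 2 + r / 2 * t : ℝ) : EReal) :=
  if_pos ht

lemma Ltilde_of_norm_eq (ht : 0 < t) (hx : ‖h x‖ = t) :
    Ltilde f h lam r x t = ((f x + inner ℝ lam (h x) + r * t : ℝ) : EReal) := by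
  rw [Ltilde_of_pos ht, hx]
  congr 1
  field_simp
  ring

lemma Ltilde_zero_of_feasible (hx : h x = 0) : Ltilde f h lam r x 0 = (f x : EReal) := by
  simp [Ltilde, hx]

lemma Ltilde_zero_of_infeasible (hx : h x ≠ 0) : Ltilde f h lam r x 0 = ⊤ := by
  simp [Ltilde, hx]

lemma qtilde_le_Ltilde : qtilde f h lam r ≤ Ltilde f h lam r x t :=
  iInf_le (fun p : EuclideanSpace ℝ (Fin n) × ℝ => Ltilde f h lam r p.1 p.2) (x, t)

lemma qtilde_le_of_feasible (hx : h x = 0) : qtilde f h lam r ≤ (f x : EReal) :=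
  Ltilde_zero_of_feasible (lam := lam) (r := r) hx ▸ qtilde_le_Ltilde

lemma qtilde_ne_top : qtilde f h lam r ≠ ⊤ :=
  ne_top_of_le_ne_top (by rw [Ltilde_of_pos one_pos]; exact EReal.coe_ne_top _)
    (qtilde_le_Ltilde (x := 0) (t := 1))

-- The penalty `r/(2t)‖h x‖² + r t/2` is smallest at `t = ‖h x‖`, where it equals `r ‖h x‖`.
lemma qtilde_le_at_norm :
    qtilde f h lam r ≤ ((f x + inner ℝ lam (h x) + r * ‖h x‖ : ℝ) : EReal) := by
  by_cases hx : h x = 0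
  · simpa [hx] using qtilde_le_of_feasible (lam := lam) (r := r) hx
  · rw [← Ltilde_of_norm_eq (norm_pos_iff.mpr hx) rfl]
    exact qtilde_le_Ltilde

lemma norm_eq_of_mem_Aset (hr : 0 < r) (ht : 0 < t) (hA : (x, t) ∈ Aset f h lam r) :
    ‖h x‖ = t := by
  have hle : Ltilde f h lam r x t ≤ ((f x + inner ℝ lam (h x) + r * ‖h x‖ : ℝ) : EReal) :=
    hA.le.trans qtilde_le_at_norm
  rw [Ltilde_of_pos ht, EReal.coe_le_coe_iff] at hle
  exact eq_of_div_mul_sq_add_le_mul hr ht (by linarith)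

lemma qtilde_eq_of_mem_Aset (hr : 0 < r) (ht : 0 < t) (hA : (x, t) ∈ Aset f h lam r) :
    qtilde f h lam r = ((f x + inner ℝ lam (h x) + r * t : ℝ) : EReal) := by
  rw [← Ltilde_of_norm_eq ht (norm_eq_of_mem_Aset hr ht hA)]
  exact hA.symm

lemma sub_mul_le_inner_of_mem_Aset {lb : EuclideanSpace ℝ (Fin m)} {rb : ℝ}
    (hopt : qtilde f h lam r ≤ qtilde f h lb rb) (hr : 0 < r) (ht : 0 < t)
    (hA : (x, t) ∈ Aset f h lam r) :
    (r - rb) * t ≤ inner ℝ (lb - lam) (h x) := by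
  have hle : ((f x + inner ℝ lam (h x) + r * t : ℝ) : EReal) ≤
      (f x + inner ℝ lb (h x) + rb * t : ℝ) := by
    rw [← qtilde_eq_of_mem_Aset hr ht hA,
      ← Ltilde_of_norm_eq (lam := lb) (r := rb) ht (norm_eq_of_mem_Aset hr ht hA)]
    exact hopt.trans qtilde_le_Ltilde
  rw [EReal.coe_le_coe_iff] at hle
  rw [inner_sub_left]
  linarith

lemma norm_sub_multiplier_update_sq_le {lb : EuclideanSpace ℝ (Fin m)} {rb : ℝ}
    (hopt : qtilde f h lam r ≤ qtilde f h lb rb) (hr : 0 < r) (ht : 0 < t)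
    (hA : (x, t) ∈ Aset f h lam r) :
    ‖lb - (lam + (r / t) • h x)‖ ^ 2 ≤ ‖lb - lam‖ ^ 2 - r * (r - 2 * rb) := by
  rw [← sub_sub]
  exact norm_sub_div_smul_sq_le hr.le ht (norm_eq_of_mem_Aset hr ht hA)
    (sub_mul_le_inner_of_mem_Aset hopt hr ht hA)

lemma feasible_of_mem_Aset_zero (hA : (x, 0) ∈ Aset f h lam r) : h x = 0 := by
  by_contra hx
  have hA' : Ltilde f h lam r x 0 = qtilde f h lam r := hA
  rw [Ltilde_zero_of_infeasible hx] at hA'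
  exact qtilde_ne_top hA'.symm

lemma qtilde_eq_of_mem_Aset_zero (hA : (x, 0) ∈ Aset f h lam r) :
    qtilde f h lam r = (f x : EReal) := by
  rw [← Ltilde_zero_of_feasible (feasible_of_mem_Aset_zero hA)]
  exact hA.symm

end AugmentedDual

theorem stmt9_general {n m : ℕ} (f : EuclideanSpace ℝ (Fin n) → ℝ)
    (h : EuclideanSpace ℝ (Fin n) → EuclideanSpace ℝ (Fin m))
    (hdual : ∃ (lambar : EuclideanSpace ℝ (Fin m)) (rbar : ℝ), 0 < rbar ∧
      ∀ (lam' : EuclideanSpace ℝ (Fin m)) (r' : ℝ), 0 < r' →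
        qtilde f h lam' r' ≤ qtilde f h lambar rbar) :
    (¬ ∃ (x : ℕ → EuclideanSpace ℝ (Fin n)) (t : ℕ → ℝ)
        (lam : ℕ → EuclideanSpace ℝ (Fin m)) (rr : ℕ → ℝ),
      0 < rr 0 ∧ ∀ k, 0 < t (k + 1) ∧
        (x (k + 1), t (k + 1)) ∈ Aset f h (lam k) (rr k) ∧
        lam (k + 1) = lam k + (rr k / t (k + 1)) • h (x (k + 1)) ∧
        rr (k + 1) = 2 * rr k) ∧
    (∀ (xh : EuclideanSpace ℝ (Fin n)) (lamk : EuclideanSpace ℝ (Fin m)) (rk : ℝ),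
      0 < rk → (xh, (0 : ℝ)) ∈ Aset f h lamk rk →
        (h xh = 0 ∧ ∀ x' : EuclideanSpace ℝ (Fin n), h x' = 0 → f xh ≤ f x') ∧
        (∀ (lam' : EuclideanSpace ℝ (Fin m)) (r' : ℝ), 0 < r' →
          qtilde f h lam' r' ≤ qtilde f h lamk rk)) := by
  obtain ⟨lb, rb, -, hopt⟩ := hdual
  refine ⟨?_, fun xh lamk rk _ hA => ?_⟩
  · rintro ⟨x, t, lam, rr, hr0, hstep⟩
    have hrr : ∀ k, rr k = 2 ^ k * rr 0 := by
      intro k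
      induction k with
      | zero => simp
      | succ k ih => rw [(hstep k).2.2.2, ih]; ring
    have hpos : ∀ k, 0 < rr k := fun k => hrr k ▸ by positivity
    have hrr_tendsto : Tendsto rr atTop atTop := by
      simpa only [← hrr] using (tendsto_pow_atTop_atTop_of_one_lt one_lt_two).atTop_mul_const hr0
    have hpenalty : Tendsto (fun k => rr k * (rr k - 2 * rb)) atTop atTop :=
      hrr_tendsto.atTop_mul_atTop₀ (by
        simpa only [sub_eq_add_neg] using tendsto_atTop_add_const_right _ (-(2 * rb)) hrr_tendsto)
    refine not_tendsto_atTop_of_le_sub (a := fun k => ‖lb - lam k‖ ^ 2) (fun k => sq_nonneg _)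
      (fun k => ?_) hpenalty
    obtain ⟨ht, hA, hlam, -⟩ := hstep k
    rw [hlam]
    exact norm_sub_multiplier_update_sq_le (hopt _ _ (hpos k)) (hpos k) ht hA
  · have hq := qtilde_eq_of_mem_Aset_zero hA
    refine ⟨⟨feasible_of_mem_Aset_zero hA, fun x' hx' => ?_⟩, fun lam' r' _ => ?_⟩
    · exact_mod_cast hq ▸ qtilde_le_of_feasible (lam := lamk) (r := rk) hx'
    · exact hq ▸ qtilde_le_of_feasible (feasible_of_mem_Aset_zero hA)

/-- if `A(λ, r)` is always nonempty and an optimal dual solution exists, then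
Algorithm 1 terminates finitely: there is no infinite run with `t_{k+1} > 0` for all `k`;
and whenever a run stops (i.e. `(x̂, 0) ∈ A(λᵏ, r_k)`), then `x̂` is an optimal primal
solution and `(λᵏ, r_k)` is an optimal dual solution. -/
theorem stmt9 {n m : ℕ} (f : EuclideanSpace ℝ (Fin n) → ℝ)
    (h : EuclideanSpace ℝ (Fin n) → EuclideanSpace ℝ (Fin m))
    (hf : ContDiff ℝ 2 f) (hh : ContDiff ℝ 2 h)
    (hA : ∀ (lam : EuclideanSpace ℝ (Fin m)) (r : ℝ), 0 < r → (Aset f h lam r).Nonempty)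
    (hdual : ∃ (lambar : EuclideanSpace ℝ (Fin m)) (rbar : ℝ), 0 < rbar ∧
      ∀ (lam' : EuclideanSpace ℝ (Fin m)) (r' : ℝ), 0 < r' →
        qtilde f h lam' r' ≤ qtilde f h lambar rbar) :
    (¬ ∃ (x : ℕ → EuclideanSpace ℝ (Fin n)) (t : ℕ → ℝ)
        (lam : ℕ → EuclideanSpace ℝ (Fin m)) (rr : ℕ → ℝ),
      0 < rr 0 ∧ ∀ k, 0 < t (k + 1) ∧
        (x (k + 1), t (k + 1)) ∈ Aset f h (lam k) (rr k) ∧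
        lam (k + 1) = lam k + (rr k / t (k + 1)) • h (x (k + 1)) ∧
        rr (k + 1) = 2 * rr k) ∧
    (∀ (xh : EuclideanSpace ℝ (Fin n)) (lamk : EuclideanSpace ℝ (Fin m)) (rk : ℝ),
      0 < rk → (xh, (0 : ℝ)) ∈ Aset f h lamk rk →
        (h xh = 0 ∧ ∀ x' : EuclideanSpace ℝ (Fin n), h x' = 0 → f xh ≤ f x') ∧
        (∀ (lam' : EuclideanSpace ℝ (Fin m)) (r' : ℝ), 0 < r' →
          qtilde f h lam' r' ≤ qtilde f h lamk rk)) :=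
  stmt9_general f h hdual
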